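/- arXiv:2003.03427 — 7 statements merged into one kernel-verified Lean document; each statement's English description precedes it below -/
import Mathlib

section
/- Let n, m be positive integers, P a symmetric n×n real matrix, F an n×n real matrix, G an n×m real matrix, Q a symmetric n×n real matrix, S an n×m real matrix, R a symmetric positive-definite m×m real matrix, and K an m×n real matrix. Then the identity zᵀ(FᵀP + PF + Q)z + 2zᵀ(PG + S)u + uᵀRu = (u − Kz)ᵀR(u − Kz) holds for all z ∈ ℝⁿ and u ∈ ℝᵐ if and only if FᵀP + PF + Q = (PG + S)R⁻¹(PG + S)ᵀ and K = −R⁻¹(PG + S)ᵀ. -/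
/-!
Expanding `(u - K z)ᵀ R (u - K z)` turns the identity into an equality of the quadratic forms of
the block matrices `[[A, B], [Bᵀ, R]]` and `[[KᵀRK, -KᵀR], [-RK, R]]`, where `A = FᵀP + PF + Q`
and `B = PG + S`. Since `A` and `KᵀRK` are symmetric, this is equivalent to `A = KᵀRK` and
`B = -KᵀR`. As `R` is invertible, the second equation is `K = -R⁻¹Bᵀ`, and substituting it into
the first gives the Riccati equation `A = BR⁻¹Bᵀ`.
-/

open Matrix

namespace Matrix

variable {α ι κ : Type*} [Fintype κ]

section CommRing

variable [CommRing α]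

lemma IsSymm.transpose_mul_mul {R : Matrix κ κ α} (hR : R.IsSymm) (K : Matrix κ ι α) :
    (Kᵀ * R * K).IsSymm := by
  rw [IsSymm, transpose_mul, transpose_mul, transpose_transpose, hR.eq, Matrix.mul_assoc]

lemma eq_transpose_mul_mul_and_eq_neg_iff [DecidableEq κ] {R : Matrix κ κ α} (hR : R.IsSymm)
    (hRu : IsUnit R) (A : Matrix ι ι α) (B : Matrix ι κ α) (K : Matrix κ ι α) :
    (A = Kᵀ * R * K ∧ B = -(Kᵀ * R)) ↔ (A = B * R⁻¹ * Bᵀ ∧ K = -(R⁻¹ * Bᵀ)) := by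
  have hdet := (isUnit_iff_isUnit_det R).mp hRu
  have hK : B = -(Kᵀ * R) ↔ K = -(R⁻¹ * Bᵀ) := by
    constructor
    · rintro rfl
      rw [transpose_neg, transpose_mul, transpose_transpose, hR.eq, Matrix.mul_neg,
        neg_neg, nonsing_inv_mul_cancel_left (h := hdet)]
    · rintro rfl
      rw [transpose_neg, transpose_mul, transpose_transpose, transpose_nonsing_inv, hR.eq,
        Matrix.neg_mul, neg_neg, nonsing_inv_mul_cancel_right (h := hdet)]
  rw [hK]
  refine and_congr_left fun hKeq => ?_
  have hKR : Kᵀ * R = -B := by rw [hK.mpr hKeq, neg_neg]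
  rw [hKR, hKeq, Matrix.neg_mul, Matrix.mul_neg, neg_neg, Matrix.mul_assoc]

variable [Fintype ι]

lemma dotProduct_sub_mulVec_mulVec_sub {R : Matrix κ κ α} (hR : R.IsSymm)
    (K : Matrix κ ι α) (z : ι → α) (u : κ → α) :
    (u - K *ᵥ z) ⬝ᵥ R *ᵥ (u - K *ᵥ z)
      = u ⬝ᵥ R *ᵥ u - 2 * (z ⬝ᵥ (Kᵀ * R) *ᵥ u) + z ⬝ᵥ (Kᵀ * R * K) *ᵥ z := by
  have hmove (w : κ → α) : (K *ᵥ z) ⬝ᵥ w = z ⬝ᵥ Kᵀ *ᵥ w := by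
    rw [dotProduct_transpose_mulVec, dotProduct_comm]
  have hcross : u ⬝ᵥ R *ᵥ (K *ᵥ z) = (K *ᵥ z) ⬝ᵥ R *ᵥ u := by
    rw [← dotProduct_transpose_mulVec, hR.eq]
  rw [mulVec_sub, dotProduct_sub, sub_dotProduct, sub_dotProduct, hcross]
  simp only [hmove, mulVec_mulVec, Matrix.mul_assoc]
  ring

lemma ext_of_dotProduct_mulVec [DecidableEq ι] [DecidableEq κ] {M N : Matrix ι κ α}
    (h : ∀ z u, z ⬝ᵥ M *ᵥ u = z ⬝ᵥ N *ᵥ u) : M = N := by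
  ext i j
  simpa [mulVec_single_one, single_one_dotProduct] using h (Pi.single i 1) (Pi.single j 1)

end CommRing

variable [Fintype ι] [Field α] [CharZero α] [DecidableEq ι]

lemma IsSymm.ext_of_dotProduct_mulVec_self {M N : Matrix ι ι α} (hM : M.IsSymm) (hN : N.IsSymm)
    (h : ∀ z, z ⬝ᵥ M *ᵥ z = z ⬝ᵥ N *ᵥ z) : M = N := by
  ext i j
  have hij := h (Pi.single i 1 + Pi.single j 1)
  have hi := h (Pi.single i 1)
  have hj := h (Pi.single j 1)
  simp only [mulVec_add, mulVec_single_one, dotProduct_add, add_dotProduct,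
    single_one_dotProduct, col_apply] at hij hi hj
  linear_combination (hij - hi - hj - hM.apply i j + hN.apply i j) / 2

lemma forall_dotProduct_mulVec_eq_dotProduct_sub_mulVec_sub_iff [DecidableEq κ] {A : Matrix ι ι α} {R : Matrix κ κ α} (hA : A.IsSymm)
    (hR : R.IsSymm) (B : Matrix ι κ α) (K : Matrix κ ι α) :
    (∀ z u, z ⬝ᵥ A *ᵥ z + 2 * (z ⬝ᵥ B *ᵥ u) + u ⬝ᵥ R *ᵥ u
        = (u - K *ᵥ z) ⬝ᵥ R *ᵥ (u - K *ᵥ z))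
      ↔ A = Kᵀ * R * K ∧ B = -(Kᵀ * R) := by
  simp only [dotProduct_sub_mulVec_mulVec_sub hR]
  constructor
  · intro h
    have hquad z : z ⬝ᵥ A *ᵥ z = z ⬝ᵥ (Kᵀ * R * K) *ᵥ z := by simpa using h z 0
    refine ⟨hA.ext_of_dotProduct_mulVec_self (hR.transpose_mul_mul K) hquad,
      ext_of_dotProduct_mulVec fun z u => ?_⟩
    rw [neg_mulVec, dotProduct_neg]
    linear_combination (h z u - hquad z) / 2
  · rintro ⟨rfl, rfl⟩ z u
    rw [neg_mulVec, dotProduct_neg]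
    ring

end Matrix

theorem completing_the_square_lqr_general
    (n m : ℕ)
    (P F Q : Matrix (Fin n) (Fin n) ℝ)
    (G S : Matrix (Fin n) (Fin m) ℝ)
    (R : Matrix (Fin m) (Fin m) ℝ)
    (K : Matrix (Fin m) (Fin n) ℝ)
    (hP : P.IsSymm) (hQ : Q.IsSymm) (hRpd : R.PosDef) :
    (∀ (z : Fin n → ℝ) (u : Fin m → ℝ),
        z ⬝ᵥ ((Fᵀ * P + P * F + Q).mulVec z)
          + 2 * (z ⬝ᵥ ((P * G + S).mulVec u))
          + u ⬝ᵥ (R.mulVec u)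
        = (u - K.mulVec z) ⬝ᵥ (R.mulVec (u - K.mulVec z)))
      ↔ (Fᵀ * P + P * F + Q = (P * G + S) * R⁻¹ * (P * G + S)ᵀ
          ∧ K = -(R⁻¹ * (P * G + S)ᵀ)) := by
  have hR : R.IsSymm := isHermitian_iff_isSymm.mp hRpd.isHermitian
  have hPF : Fᵀ * P = (P * F)ᵀ := by rw [transpose_mul, hP.eq]
  have hA : (Fᵀ * P + P * F + Q).IsSymm := (hPF ▸ isSymm_transpose_add_self (P * F)).add hQ
  rw [forall_dotProduct_mulVec_eq_dotProduct_sub_mulVec_sub_iff hA hR,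
    eq_transpose_mul_mul_and_eq_neg_iff hR hRpd.isUnit]

theorem completing_the_square_lqr
    (n m : ℕ) (hn : 0 < n) (hm : 0 < m)
    (P F Q : Matrix (Fin n) (Fin n) ℝ)
    (G S : Matrix (Fin n) (Fin m) ℝ)
    (R : Matrix (Fin m) (Fin m) ℝ)
    (K : Matrix (Fin m) (Fin n) ℝ)
    (hP : P.IsSymm) (hQ : Q.IsSymm) (hR : R.IsSymm) (hRpd : R.PosDef) :
    (∀ (z : Fin n → ℝ) (u : Fin m → ℝ),
        z ⬝ᵥ ((Fᵀ * P + P * F + Q).mulVec z)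
          + 2 * (z ⬝ᵥ ((P * G + S).mulVec u))
          + u ⬝ᵥ (R.mulVec u)
        = (u - K.mulVec z) ⬝ᵥ (R.mulVec (u - K.mulVec z)))
      ↔ (Fᵀ * P + P * F + Q = (P * G + S) * R⁻¹ * (P * G + S)ᵀ
          ∧ K = -(R⁻¹ * (P * G + S)ᵀ)) :=
  completing_the_square_lqr_general n m P F Q G S R K hP hQ hRpd
end

section
/- Let n, m be positive integers, F an n×n real matrix, G an n×m real matrix, Q a symmetric n×n real matrix, S an n×m real matrix, R a symmetric positive-definite m×m real matrix, P a symmetric n×n real matrix satisfying the Algebraic Riccati Equation FᵀP + PF + Q = (PG + S)R⁻¹(PG + S)ᵀ, and K = −R⁻¹(PG + S)ᵀ. Suppose z : [0,∞) → ℝⁿ is differentiable, u : [0,∞) → ℝᵐ is continuous, ż(t) = Fz(t) + Gu(t) for all t ≥ 0, z(t) → 0 as t → ∞, and both t ↦ z(t)ᵀQz(t) + 2z(t)ᵀSu(t) + u(t)ᵀRu(t) and t ↦ (u(t) − Kz(t))ᵀR(u(t) − Kz(t)) are integrable on [0,∞). Then (1/2)∫₀^∞ (z(t)ᵀQz(t)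 + 2z(t)ᵀSu(t) + u(t)ᵀRu(t)) dt = (1/2)z(0)ᵀPz(0) + (1/2)∫₀^∞ (u(t) − Kz(t))ᵀR(u(t) − Kz(t)) dt. -/
/-!
Along a trajectory of `ż = F z + G u`, the derivative of `V = zᵀ P z` plus the running cost is,
by completing the square with the Riccati equation, exactly `(u - K z)ᵀ R (u - K z)`.
Integrating over `[0, ∞)` and using `V (z t) → 0` gives the identity.
-/

open Matrix MeasureTheory Filter Topology

section Calculus

variable {𝕜 ι : Type*} [NontriviallyNormedField 𝕜] [Fintype ι]
  {f g : 𝕜 → ι → 𝕜} {f' g' : ι → 𝕜} {t : 𝕜}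

theorem HasDerivAt.dotProduct (hf : HasDerivAt f f' t) (hg : HasDerivAt g g' t) :
    HasDerivAt (fun s => f s ⬝ᵥ g s) (f' ⬝ᵥ g t + f t ⬝ᵥ g') t := by
  rw [hasDerivAt_pi] at hf hg
  unfold _root_.dotProduct
  rw [← Finset.sum_add_distrib]
  exact HasDerivAt.fun_sum fun i _ => (hf i).mul (hg i)

theorem HasDerivAt.matrix_mulVec {κ : Type*} (A : Matrix κ ι 𝕜) (hf : HasDerivAt f f' t) :
    HasDerivAt (fun s => A *ᵥ f s) (A *ᵥ f') t :=
  hasDerivAt_pi.mpr fun i => by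
    simpa [mulVec] using (hasDerivAt_const t (A i)).dotProduct hf

end Calculus

theorem integral_Ici_eq_add_integral_of_hasDerivAt {f h V V' : ℝ → ℝ} {a : ℝ}
    (hV : ∀ t ∈ Set.Ici a, HasDerivAt V (V' t) t) (hV_top : Tendsto V atTop (𝓝 0))
    (hf : IntegrableOn f (Set.Ici a)) (hh : IntegrableOn h (Set.Ici a))
    (hfh : ∀ t, f t + V' t = h t) :
    ∫ t in Set.Ici a, f t = V a + ∫ t in Set.Ici a, h t := by
  have hV'_eq : V' = fun t => h t - f t := funext fun t => eq_sub_of_add_eq' (hfh t)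
  have hV'_int : IntegrableOn V' (Set.Ici a) := hV'_eq ▸ hh.sub hf
  have hV'_integral : ∫ t in Set.Ici a, V' t = -V a := by
    rw [integral_Ici_eq_integral_Ioi, integral_Ioi_of_hasDerivAt_of_tendsto' hV
      (hV'_int.mono_set Set.Ioi_subset_Ici_self) hV_top, zero_sub]
  rw [hV'_eq, integral_sub hh hf] at hV'_integral
  linarith

section Riccati

variable {ι κ α : Type*} [Fintype κ] [CommRing α]

theorem mul_eq_neg_of_eq_neg_inv_mul [DecidableEq κ] {R : Matrix κ κ α} {K N : Matrix κ ι α}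
    (hR_det : IsUnit R.det) (hK : K = -(R⁻¹ * N)) : R * K = -N := by
  rw [hK, Matrix.mul_neg, mul_nonsing_inv_cancel_left _ _ hR_det]

theorem transpose_mul_mul_eq_of_eq_neg_inv_mul [DecidableEq κ] {R : Matrix κ κ α}
    {K : Matrix κ ι α} {M : Matrix ι κ α} (hR : R.IsSymm) (hR_det : IsUnit R.det)
    (hK : K = -(R⁻¹ * Mᵀ)) : Kᵀ * R * K = M * R⁻¹ * Mᵀ := by
  rw [Matrix.mul_assoc, mul_eq_neg_of_eq_neg_inv_mul hR_det hK, hK, transpose_neg, transpose_mul,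
    transpose_transpose, transpose_nonsing_inv, hR.eq, Matrix.neg_mul, Matrix.mul_neg, neg_neg,
    Matrix.mul_assoc]

variable [Fintype ι] {F P Q : Matrix ι ι α} {G S : Matrix ι κ α} {R : Matrix κ κ α} {K : Matrix κ ι α}

theorem riccati_completing_square (hR : R.IsSymm) (hP : P.IsSymm)
    (hRK : R * K = -(P * G + S)ᵀ) (hKRK : Fᵀ * P + P * F + Q = Kᵀ * R * K)
    (x : ι → α) (y : κ → α) :
    x ⬝ᵥ Q *ᵥ x + 2 * (x ⬝ᵥ S *ᵥ y) + y ⬝ᵥ R *ᵥ y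
      + ((F *ᵥ x + G *ᵥ y) ⬝ᵥ P *ᵥ x + x ⬝ᵥ P *ᵥ (F *ᵥ x + G *ᵥ y))
    = (y - K *ᵥ x) ⬝ᵥ R *ᵥ (y - K *ᵥ x) := by
  have hPsym : ∀ v, v ⬝ᵥ P *ᵥ x = x ⬝ᵥ P *ᵥ v := fun v => by
    rw [← dotProduct_transpose_mulVec, hP.eq]
  have hRsym : (K *ᵥ x) ⬝ᵥ R *ᵥ y = y ⬝ᵥ R *ᵥ (K *ᵥ x) := by
    rw [← dotProduct_transpose_mulVec, hR.eq]
  have hcross : y ⬝ᵥ R *ᵥ (K *ᵥ x) = -(x ⬝ᵥ (P * G + S) *ᵥ y) := by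
    rw [mulVec_mulVec, hRK, neg_mulVec, dotProduct_neg, dotProduct_transpose_mulVec]
  have hquad : (K *ᵥ x) ⬝ᵥ R *ᵥ (K *ᵥ x) = x ⬝ᵥ (Fᵀ * P + P * F + Q) *ᵥ x := by
    rw [hKRK, ← mulVec_mulVec, ← mulVec_mulVec, dotProduct_transpose_mulVec, dotProduct_comm]
  rw [hPsym, mulVec_sub, dotProduct_sub, sub_dotProduct, sub_dotProduct, hRsym, hcross, hquad]
  simp only [mulVec_add, dotProduct_add, add_mulVec, ← mulVec_mulVec, dotProduct_transpose_mulVec,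
    dotProduct_comm (P *ᵥ x), hPsym]
  ring

end Riccati

theorem lqr_completing_square_integral_identity_general
    (n m : ℕ)
    (F P Q : Matrix (Fin n) (Fin n) ℝ)
    (G S : Matrix (Fin n) (Fin m) ℝ)
    (R : Matrix (Fin m) (Fin m) ℝ)
    (K : Matrix (Fin m) (Fin n) ℝ)
    (hR : R.IsSymm) (hRpd : R.PosDef) (hP : P.IsSymm)
    (hARE : Fᵀ * P + P * F + Q = (P * G + S) * R⁻¹ * (P * G + S)ᵀ)
    (hK : K = -(R⁻¹ * (P * G + S)ᵀ))
    (z : ℝ → Fin n → ℝ) (u : ℝ → Fin m → ℝ)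
    (hz : ∀ t ∈ Set.Ici (0:ℝ),
      HasDerivAt z (F.mulVec (z t) + G.mulVec (u t)) t)
    (hlim : Tendsto z atTop (nhds 0))
    (hint1 : IntegrableOn
      (fun t => z t ⬝ᵥ Q.mulVec (z t) + 2 * (z t ⬝ᵥ S.mulVec (u t))
        + u t ⬝ᵥ R.mulVec (u t)) (Set.Ici (0:ℝ)))
    (hint2 : IntegrableOn
      (fun t => (u t - K.mulVec (z t)) ⬝ᵥ R.mulVec (u t - K.mulVec (z t)))
      (Set.Ici (0:ℝ))) :
    (1/2 : ℝ) * ∫ t in Set.Ici (0:ℝ),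
        (z t ⬝ᵥ Q.mulVec (z t) + 2 * (z t ⬝ᵥ S.mulVec (u t))
          + u t ⬝ᵥ R.mulVec (u t))
    = (1/2 : ℝ) * (z 0 ⬝ᵥ P.mulVec (z 0))
      + (1/2 : ℝ) * ∫ t in Set.Ici (0:ℝ),
          ((u t - K.mulVec (z t)) ⬝ᵥ R.mulVec (u t - K.mulVec (z t))) := by
  have hR_det : IsUnit R.det := hRpd.det_pos.ne'.isUnit
  have hRK := mul_eq_neg_of_eq_neg_inv_mul hR_det hK
  have hKRK := hARE.trans (transpose_mul_mul_eq_of_eq_neg_inv_mul hR hR_det hK).symm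
  have hV_top : Tendsto (fun t => z t ⬝ᵥ P *ᵥ z t) atTop (𝓝 0) := by
    have hcont : Continuous fun v : Fin n → ℝ => v ⬝ᵥ P *ᵥ v := by fun_prop
    simpa [Function.comp_def] using (hcont.tendsto 0).comp hlim
  rw [integral_Ici_eq_add_integral_of_hasDerivAt
    (fun t ht => (hz t ht).dotProduct ((hz t ht).matrix_mulVec P)) hV_top hint1 hint2
    fun t => riccati_completing_square hR hP hRK hKRK (z t) (u t)]
  ring

theorem lqr_completing_square_integral_identity
    (n m : ℕ) (hn : 0 < n) (hm : 0 < m)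
    (F P Q : Matrix (Fin n) (Fin n) ℝ)
    (G S : Matrix (Fin n) (Fin m) ℝ)
    (R : Matrix (Fin m) (Fin m) ℝ)
    (K : Matrix (Fin m) (Fin n) ℝ)
    (hQ : Q.IsSymm) (hR : R.IsSymm) (hRpd : R.PosDef) (hP : P.IsSymm)
    (hARE : Fᵀ * P + P * F + Q = (P * G + S) * R⁻¹ * (P * G + S)ᵀ)
    (hK : K = -(R⁻¹ * (P * G + S)ᵀ))
    (z : ℝ → Fin n → ℝ) (u : ℝ → Fin m → ℝ)
    (hz : ∀ t ∈ Set.Ici (0:ℝ),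
      HasDerivAt z (F.mulVec (z t) + G.mulVec (u t)) t)
    (hu : ContinuousOn u (Set.Ici (0:ℝ)))
    (hlim : Tendsto z atTop (nhds 0))
    (hint1 : IntegrableOn
      (fun t => z t ⬝ᵥ Q.mulVec (z t) + 2 * (z t ⬝ᵥ S.mulVec (u t))
        + u t ⬝ᵥ R.mulVec (u t)) (Set.Ici (0:ℝ)))
    (hint2 : IntegrableOn
      (fun t => (u t - K.mulVec (z t)) ⬝ᵥ R.mulVec (u t - K.mulVec (z t)))
      (Set.Ici (0:ℝ))) :
    (1/2 : ℝ) * ∫ t in Set.Ici (0:ℝ),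
        (z t ⬝ᵥ Q.mulVec (z t) + 2 * (z t ⬝ᵥ S.mulVec (u t))
          + u t ⬝ᵥ R.mulVec (u t))
    = (1/2 : ℝ) * (z 0 ⬝ᵥ P.mulVec (z 0))
      + (1/2 : ℝ) * ∫ t in Set.Ici (0:ℝ),
          ((u t - K.mulVec (z t)) ⬝ᵥ R.mulVec (u t - K.mulVec (z t))) :=
  lqr_completing_square_integral_identity_general n m F P Q G S R K hR hRpd hP hARE hK z u hz hlim
    hint1 hint2
end

section
/- Let n, m be positive integers, F an n×n real matrix, G an n×m real matrix, Q a symmetric n×n real matrix, R a symmetric positive-definite m×m real matrix, P a symmetric n×n real matrix satisfying FᵀP + PF + Q = PGR⁻¹GᵀP, and K = −R⁻¹GᵀP. Let f : ℝⁿ × ℝᵐ → ℝⁿ be a function such that (z,u) ↦ f(z,u) − (Fz + Gu) is O(‖(z,u)‖²) as (z,u) → (0,0). Then the function z ↦ 2 f(z, Kz)ᵀ P z + zᵀ(Q + PGR⁻¹GᵀP)z is O(‖z‖³) as z → 0. (That is, along the closed-loop nonlinear dynamics ż = f(z, Kz), the derivative of the Lyapunov candidate zᵀPz equals −zᵀ(Q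 + PGR⁻¹GᵀP)z up to terms of order ‖z‖³.) -/
/-!
With the Riccati gain `K`, the Riccati equation becomes the Lyapunov equation
`(F + G K)ᵀ P + P (F + G K) = -(Q + P G R⁻¹ Gᵀ P)` for the linearised closed loop, so the
quadratic part of the expression cancels exactly. What is left is `2 r(z, K z) ⬝ P z`, where
`r(z, u) = f(z, u) - (F z + G u)` is `O(‖z‖²)` along `u = K z`, and `P z = O(‖z‖)`.
-/

open Matrix Asymptotics Filter Topology

namespace Matrix

variable {ι κ 𝕜 : Type*} [Fintype ι] [Fintype κ]

theorem two_mul_mulVec_dotProduct_mulVec [CommRing 𝕜] {A P : Matrix ι ι 𝕜} (hP : P.IsSymm)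
    (z : ι → 𝕜) : 2 * ((A *ᵥ z) ⬝ᵥ (P *ᵥ z)) = z ⬝ᵥ ((Aᵀ * P + P * A) *ᵥ z) := by
  have hAP : (A *ᵥ z) ⬝ᵥ (P *ᵥ z) = z ⬝ᵥ ((Aᵀ * P) *ᵥ z) := by
    rw [← vecMul_transpose, ← dotProduct_mulVec, mulVec_mulVec]
  have hPA : (A *ᵥ z) ⬝ᵥ (P *ᵥ z) = z ⬝ᵥ ((P * A) *ᵥ z) := by
    rw [dotProduct_comm, ← vecMul_transpose, ← dotProduct_mulVec, mulVec_mulVec, hP.eq]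
  rw [add_mulVec, dotProduct_add, ← hAP, ← hPA, two_mul]

theorem closedLoop_lyapunov_of_riccati [DecidableEq κ] [CommRing 𝕜]
    {F Q P : Matrix ι ι 𝕜} {G : Matrix ι κ 𝕜} {R : Matrix κ κ 𝕜} {K : Matrix κ ι 𝕜}
    (hR : R.IsSymm) (hP : P.IsSymm) (hARE : Fᵀ * P + P * F + Q = P * G * R⁻¹ * Gᵀ * P)
    (hK : K = -(R⁻¹ * Gᵀ * P)) :
    (F + G * K)ᵀ * P + P * (F + G * K) + (Q + P * G * R⁻¹ * Gᵀ * P) = 0 := by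
  have hKt : Kᵀ = -(P * G * R⁻¹) := by
    rw [hK, transpose_neg, transpose_mul, transpose_mul, transpose_transpose,
      transpose_nonsing_inv, hR.eq, hP.eq, Matrix.mul_assoc]
  have hGK : P * (G * K) = -(P * G * R⁻¹ * Gᵀ * P) := by
    simp only [hK, Matrix.mul_neg, Matrix.mul_assoc]
  calc (F + G * K)ᵀ * P + P * (F + G * K) + (Q + P * G * R⁻¹ * Gᵀ * P)
      = Fᵀ * P + P * F + Q - P * G * R⁻¹ * Gᵀ * P := by
        rw [transpose_add, transpose_mul, hKt, Matrix.add_mul, Matrix.mul_add, hGK]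
        simp only [Matrix.neg_mul, Matrix.mul_assoc]
        abel
    _ = 0 := by rw [hARE, sub_self]

theorem norm_dotProduct_le [SeminormedRing 𝕜] (v w : ι → 𝕜) :
    ‖v ⬝ᵥ w‖ ≤ Fintype.card ι * (‖v‖ * ‖w‖) := by
  calc ‖v ⬝ᵥ w‖ ≤ ∑ i, ‖v i * w i‖ := norm_sum_le _ _
    _ ≤ ∑ _i : ι, ‖v‖ * ‖w‖ := by
        gcongr with i
        exact (norm_mul_le _ _).trans <|
          mul_le_mul (norm_le_pi_norm v i) (norm_le_pi_norm w i) (norm_nonneg _) (norm_nonneg _)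
    _ = Fintype.card ι * (‖v‖ * ‖w‖) := by simp

end Matrix

namespace Asymptotics

theorem IsBigO.dotProduct {α ι 𝕜 : Type*} [Fintype ι] [SeminormedRing 𝕜] {l : Filter α}
    {u v : α → ι → 𝕜} {g h : α → ℝ} (hu : u =O[l] g) (hv : v =O[l] h) :
    (fun x => u x ⬝ᵥ v x) =O[l] fun x => g x * h x :=
  have hbound : (fun x => u x ⬝ᵥ v x) =O[l] fun x => ‖u x‖ * ‖v x‖ :=
    .of_bound (Fintype.card ι) (.of_forall fun x => by
      simpa [abs_of_nonneg, norm_nonneg] using norm_dotProduct_le (u x) (v x))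
  hbound.trans (hu.norm_left.mul hv.norm_left)

theorem IsBigO.comp_continuousLinearMap_norm_pow {𝕜 E F V : Type*} [NontriviallyNormedField 𝕜]
    [NormedAddCommGroup E] [NormedSpace 𝕜 E] [NormedAddCommGroup F] [NormedSpace 𝕜 F] [Norm V]
    {g : F → V} {k : ℕ} (hg : g =O[𝓝 0] fun w => ‖w‖ ^ k) (L : E →L[𝕜] F) :
    (fun x => g (L x)) =O[𝓝 0] fun x => ‖x‖ ^ k :=
  (hg.comp_tendsto (L.continuous.tendsto' 0 0 (map_zero L))).trans
    ((L.isBigO_id _).norm_norm.pow k)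

end Asymptotics

theorem lyapunov_derivative_bigO_general
    (n m : ℕ)
    (F Q P : Matrix (Fin n) (Fin n) ℝ)
    (G : Matrix (Fin n) (Fin m) ℝ)
    (R : Matrix (Fin m) (Fin m) ℝ)
    (hR : R.IsSymm) (hP : P.IsSymm)
    (hARE : Fᵀ * P + P * F + Q = P * G * R⁻¹ * Gᵀ * P)
    (K : Matrix (Fin m) (Fin n) ℝ) (hK : K = -(R⁻¹ * Gᵀ * P))
    (f : (Fin n → ℝ) × (Fin m → ℝ) → Fin n → ℝ)
    (hf : (fun w : (Fin n → ℝ) × (Fin m → ℝ) =>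
        f w - (F.mulVec w.1 + G.mulVec w.2)) =O[nhds 0] fun w => ‖w‖ ^ 2) :
    (fun z : Fin n → ℝ =>
        2 * (f (z, K.mulVec z) ⬝ᵥ P.mulVec z)
          + z ⬝ᵥ ((Q + P * G * R⁻¹ * Gᵀ * P).mulVec z))
      =O[nhds 0] fun z => ‖z‖ ^ 3 := by
  set r := fun w : (Fin n → ℝ) × (Fin m → ℝ) => f w - (F *ᵥ w.1 + G *ᵥ w.2)
  have hcancel : ∀ z, 2 * (((F + G * K) *ᵥ z) ⬝ᵥ P *ᵥ z)
      + z ⬝ᵥ ((Q + P * G * R⁻¹ * Gᵀ * P) *ᵥ z) = 0 := fun z => by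
    rw [two_mul_mulVec_dotProduct_mulVec hP, ← dotProduct_add, ← add_mulVec,
      closedLoop_lyapunov_of_riccati hR hP hARE hK, zero_mulVec, dotProduct_zero]
  have hlin : ∀ z, 2 * (f (z, K *ᵥ z) ⬝ᵥ P *ᵥ z) + z ⬝ᵥ ((Q + P * G * R⁻¹ * Gᵀ * P) *ᵥ z)
      = 2 * (r (z, K *ᵥ z) ⬝ᵥ P *ᵥ z) := fun z => by
    have hsplit : f (z, K *ᵥ z) = r (z, K *ᵥ z) + (F + G * K) *ᵥ z := by
      simp only [r, add_mulVec, mulVec_mulVec, sub_add_cancel]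
    rw [hsplit, add_dotProduct, mul_add, add_assoc, hcancel, add_zero]
  have hr : (fun z => r (z, K *ᵥ z)) =O[𝓝 0] fun z => ‖z‖ ^ 2 :=
    hf.comp_continuousLinearMap_norm_pow
      ((ContinuousLinearMap.id ℝ _).prod (LinearMap.toContinuousLinearMap K.mulVecLin))
  have hPz : (fun z => P *ᵥ z) =O[𝓝 0] fun z => ‖z‖ :=
    ((LinearMap.toContinuousLinearMap P.mulVecLin).isBigO_id _).norm_right
  refine (((hr.dotProduct hPz).const_mul_left 2).congr_left fun z => (hlin z).symm).trans ?_
  simp only [← pow_succ]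
  exact isBigO_refl _ _

theorem lyapunov_derivative_bigO
    (n m : ℕ) (hn : 0 < n) (hm : 0 < m)
    (F Q P : Matrix (Fin n) (Fin n) ℝ)
    (G : Matrix (Fin n) (Fin m) ℝ)
    (R : Matrix (Fin m) (Fin m) ℝ)
    (hQ : Q.IsSymm) (hR : R.IsSymm) (hRpd : R.PosDef) (hP : P.IsSymm)
    (hARE : Fᵀ * P + P * F + Q = P * G * R⁻¹ * Gᵀ * P)
    (K : Matrix (Fin m) (Fin n) ℝ) (hK : K = -(R⁻¹ * Gᵀ * P))
    (f : (Fin n → ℝ) × (Fin m → ℝ) → Fin n → ℝ)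
    (hf : (fun w : (Fin n → ℝ) × (Fin m → ℝ) =>
        f w - (F.mulVec w.1 + G.mulVec w.2)) =O[nhds 0] fun w => ‖w‖ ^ 2) :
    (fun z : Fin n → ℝ =>
        2 * (f (z, K.mulVec z) ⬝ᵥ P.mulVec z)
          + z ⬝ᵥ ((Q + P * G * R⁻¹ * Gᵀ * P).mulVec z))
      =O[nhds 0] fun z => ‖z‖ ^ 3 :=
  lyapunov_derivative_bigO_general n m F Q P G R hR hP hARE K hK f hf
end

section
/- Let n, m be positive integers, F an n×n real matrix, G an n×m real matrix, Q a symmetric positive-definite n×n real matrix, R a symmetric positive-definite m×m real matrix, and P a symmetric positive-semidefinite n×n real matrix satisfying the Algebraic Riccati Equation FᵀP + PF + Q = PGR⁻¹GᵀP. Set K = −R⁻¹GᵀP. Then every complex eigenvalue μ of the closed-loop matrix F + GK (viewed as a complex matrix) satisfies Re μ < 0; i.e., F + GK is Hurwitz. -/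
/-!
With `A = F + G K`, the Riccati equation turns into the Lyapunov equation
`Aᵀ P + P A = -(Q + P G R⁻¹ Gᵀ P)`, whose right-hand side is negative definite. If `A v = μ v`
with `v ≠ 0`, evaluating the left-hand side at `v` gives `2 Re μ · v* P v` with `v* P v ≥ 0`,
while the right-hand side gives a negative number, so `Re μ < 0`.
-/

open Matrix
open scoped ComplexOrder

namespace Matrix

variable {n : Type*} [Fintype n]

theorem closedLoop_lyapunov_of_riccati_s5 {m α : Type*} [Fintype m] [CommRing α]
    {F Q P : Matrix n n α} {G : Matrix n m α} {S : Matrix m m α} (hP : Pᵀ = P) (hS : Sᵀ = S)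
    (hARE : Fᵀ * P + P * F + Q = P * G * S * Gᵀ * P) :
    (F + G * -(S * Gᵀ * P))ᵀ * P + P * (F + G * -(S * Gᵀ * P)) = -(Q + P * G * S * Gᵀ * P) := by
  have hFP : Fᵀ * P + P * F = P * G * S * Gᵀ * P - Q := eq_sub_of_add_eq hARE
  calc (F + G * -(S * Gᵀ * P))ᵀ * P + P * (F + G * -(S * Gᵀ * P))
      = (Fᵀ * P + P * F) - P * G * S * Gᵀ * P - P * G * S * Gᵀ * P := by
        simp only [transpose_add, transpose_mul, transpose_neg, transpose_transpose, hP, hS,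
          Matrix.add_mul, Matrix.mul_add, Matrix.mul_neg, Matrix.neg_mul, Matrix.mul_assoc]
        abel
    _ = -(Q + P * G * S * Gᵀ * P) := by rw [hFP]; abel

variable [DecidableEq n]

theorem PosSemidef.map_ofReal {M : Matrix n n ℝ} (hM : M.PosSemidef) :
    (M.map Complex.ofReal).PosSemidef := by
  obtain ⟨B, rfl⟩ : ∃ B : Matrix n n ℝ, M = star B * B := by
    open scoped MatrixOrder in exact CStarAlgebra.nonneg_iff_eq_star_mul_self.mp hM.nonneg
  have hB : (star B * B).map Complex.ofReal = (B.map Complex.ofReal)ᴴ * B.map Complex.ofReal := by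
    rw [← conjTranspose_map _ (fun r => (Complex.conj_ofReal r).symm)]
    exact Complex.ofRealHom.mapMatrix.map_mul (star B) B
  rw [hB]
  exact posSemidef_conjTranspose_mul_self _

theorem PosDef.map_ofReal {M : Matrix n n ℝ} (hM : M.PosDef) :
    (M.map Complex.ofReal).PosDef := by
  refine hM.posSemidef.map_ofReal.posDef_iff_det_ne_zero.mpr ?_
  rw [show M.map Complex.ofReal = Complex.ofRealHom.mapMatrix M from rfl, ← RingHom.map_det]
  exact Complex.ofReal_ne_zero.mpr hM.det_pos.ne'

theorem re_lt_zero_of_mem_spectrum_of_lyapunov {𝕜 : Type*} [RCLike 𝕜] {A P Q : Matrix n n 𝕜}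
    (hP : P.PosSemidef) (hQ : Q.PosDef) (hAPQ : Aᴴ * P + P * A = -Q) {μ : 𝕜}
    (hμ : μ ∈ spectrum 𝕜 A) : RCLike.re μ < 0 := by
  rw [← spectrum_toLin', ← Module.End.hasEigenvalue_iff_mem_spectrum] at hμ
  obtain ⟨v, hv⟩ := hμ.exists_hasEigenvector
  have hAv : A *ᵥ v = μ • v := by simpa using hv.apply_eq_smul
  have hquad :
      star v ⬝ᵥ (Aᴴ * P + P * A) *ᵥ v = (2 * RCLike.re μ : 𝕜) * (star v ⬝ᵥ P *ᵥ v) := by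
    rw [add_mulVec, dotProduct_add, ← mulVec_mulVec, ← mulVec_mulVec, dotProduct_mulVec,
      ← star_mulVec, hAv, mulVec_smul, star_smul, smul_dotProduct, dotProduct_smul,
      ← RCLike.add_conj]
    simp only [smul_eq_mul, RCLike.star_def]
    ring
  have hre := congrArg RCLike.re hquad
  rw [hAPQ, neg_mulVec, dotProduct_neg, map_neg, ← RCLike.ofReal_ofNat, ← RCLike.ofReal_mul,
    RCLike.re_ofReal_mul] at hre
  nlinarith [hQ.re_dotProduct_pos hv.2, hP.re_dotProduct_nonneg v]

theorem re_lt_zero_of_mem_spectrum_map_ofReal_of_lyapunov {A P Q : Matrix n n ℝ}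
    (hP : P.PosSemidef) (hQ : Q.PosDef) (hAPQ : Aᵀ * P + P * A = -Q) {μ : ℂ}
    (hμ : μ ∈ spectrum ℂ (A.map Complex.ofReal)) : μ.re < 0 := by
  refine re_lt_zero_of_mem_spectrum_of_lyapunov hP.map_ofReal hQ.map_ofReal ?_ hμ
  rw [← conjTranspose_map _ (fun r => (Complex.conj_ofReal r).symm),
    conjTranspose_eq_transpose_of_trivial]
  have h := congrArg Complex.ofRealHom.mapMatrix hAPQ
  simp only [RingHom.mapMatrix_apply, map_add, map_mul, map_neg] at h
  exact h

end Matrix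

theorem closed_loop_hurwitz_general
    (n m : ℕ)
    (F Q P : Matrix (Fin n) (Fin n) ℝ)
    (G : Matrix (Fin n) (Fin m) ℝ)
    (R : Matrix (Fin m) (Fin m) ℝ)
    (hQ : Q.PosDef) (hR : R.PosDef) (hP : P.PosSemidef)
    (hARE : Fᵀ * P + P * F + Q = P * G * R⁻¹ * Gᵀ * P)
    (K : Matrix (Fin m) (Fin n) ℝ) (hK : K = -(R⁻¹ * Gᵀ * P))
    (μ : ℂ)
    (hμ : μ ∈ spectrum ℂ ((F + G * K).map (Complex.ofReal))) :
    μ.re < 0 := by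
  have hPt : Pᵀ = P := hP.isHermitian
  have hPGRGP : (P * G * R⁻¹ * Gᵀ * P).PosSemidef := by
    simpa only [conjTranspose_eq_transpose_of_trivial, hPt, Matrix.mul_assoc]
      using (hR.inv.posSemidef.mul_mul_conjTranspose_same G).conjTranspose_mul_mul_same P
  subst hK
  exact re_lt_zero_of_mem_spectrum_map_ofReal_of_lyapunov hP (hQ.add_posSemidef hPGRGP)
    (closedLoop_lyapunov_of_riccati_s5 hPt hR.inv.isHermitian hARE) hμ

theorem closed_loop_hurwitz
    (n m : ℕ) (hn : 0 < n) (hm : 0 < m)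
    (F Q P : Matrix (Fin n) (Fin n) ℝ)
    (G : Matrix (Fin n) (Fin m) ℝ)
    (R : Matrix (Fin m) (Fin m) ℝ)
    (hQ : Q.PosDef) (hR : R.PosDef) (hP : P.PosSemidef)
    (hARE : Fᵀ * P + P * F + Q = P * G * R⁻¹ * Gᵀ * P)
    (K : Matrix (Fin m) (Fin n) ℝ) (hK : K = -(R⁻¹ * Gᵀ * P))
    (μ : ℂ)
    (hμ : μ ∈ spectrum ℂ ((F + G * K).map (Complex.ofReal))) :
    μ.re < 0 :=
  closed_loop_hurwitz_general n m F Q P G R hQ hR hP hARE K hK μ hμ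
end

section
/- Let n, k be positive integers, A an n×n complex matrix, μ : {1,…,k} → ℂ, and ψ₁,…,ψₖ ∈ ℂⁿ row vectors that are left eigenvectors of A, i.e., ψₗᵀA = μₗ ψₗᵀ (equivalently vecMul ψₗ A = μₗ • ψₗ) for each l. Define p : ℂⁿ → ℂ by p(z) = ∏_{l=1}^{k} ⟨ψₗ, z⟩, where ⟨ψ, z⟩ = Σᵢ ψᵢ zᵢ. Then for every z ∈ ℂⁿ, the Fréchet derivative of p at z evaluated in the direction Az satisfies Dp(z)[Az] = (μ₁ + ⋯ + μₖ) · p(z). In other words, the homogeneous degree-k polynomial function p is an eigenfunction, with eigenvalue μ₁ + ⋯ + μₖ, of the Lie derivative operator p ↦ Dp(z)[Az]. -/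
open Matrix

theorem fderiv_finsetProd_apply_of_fderiv_apply_eq_mul {𝕜 E ι : Type*}
    [NontriviallyNormedField 𝕜] [NormedAddCommGroup E] [NormedSpace 𝕜 E]
    (u : Finset ι) {g : ι → E → 𝕜} {μ : ι → 𝕜} {x v : E}
    (hg : ∀ i ∈ u, DifferentiableAt 𝕜 (g i) x)
    (hμ : ∀ i ∈ u, fderiv 𝕜 (g i) x v = μ i * g i x) :
    fderiv 𝕜 (∏ i ∈ u, g i ·) x v = (∑ i ∈ u, μ i) * ∏ i ∈ u, g i x := by
  classical
  rw [fderiv_finsetProd hg, _root_.sum_apply, Finset.sum_mul]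
  refine Finset.sum_congr rfl fun i hi => ?_
  rw [_root_.smul_apply, hμ i hi, smul_eq_mul, ← Finset.mul_prod_erase u _ hi]
  ring

namespace Matrix

variable {𝕜 m : Type*} [NontriviallyNormedField 𝕜] [CompleteSpace 𝕜] [Fintype m]

theorem hasFDerivAt_dotProduct (ψ z : m → 𝕜) :
    HasFDerivAt (ψ ⬝ᵥ ·) (LinearMap.toContinuousLinearMap (dotProductBilin 𝕜 𝕜 ψ)) z :=
  (LinearMap.toContinuousLinearMap (dotProductBilin 𝕜 𝕜 ψ)).hasFDerivAt

theorem fderiv_dotProduct_apply (ψ z v : m → 𝕜) : fderiv 𝕜 (ψ ⬝ᵥ ·) z v = ψ ⬝ᵥ v := by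
  rw [(hasFDerivAt_dotProduct ψ z).fderiv]
  rfl

end Matrix

theorem Matrix.dotProduct_mulVec_of_vecMul_eq_smul {R m : Type*} [CommSemiring R] [Fintype m]
    {A : Matrix m m R} {ψ : m → R} {c : R} (h : vecMul ψ A = c • ψ) (z : m → R) :
    ψ ⬝ᵥ A *ᵥ z = c * (ψ ⬝ᵥ z) := by
  rw [dotProduct_mulVec, h, smul_dotProduct, smul_eq_mul]

theorem product_of_left_eigenfunctions_is_eigenfunction_general
    (n k : ℕ)
    (A : Matrix (Fin n) (Fin n) ℂ)
    (μ : Fin k → ℂ) (ψ : Fin k → Fin n → ℂ)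
    (hψ : ∀ l, Matrix.vecMul (ψ l) A = μ l • ψ l) :
    ∀ z : Fin n → ℂ,
      fderiv ℂ (fun w : Fin n → ℂ => ∏ l, (ψ l ⬝ᵥ w)) z (A.mulVec z)
        = (∑ l, μ l) * ∏ l, (ψ l ⬝ᵥ z) := fun z =>
  fderiv_finsetProd_apply_of_fderiv_apply_eq_mul Finset.univ
    (fun l _ => (hasFDerivAt_dotProduct (ψ l) z).differentiableAt)
    (fun l _ => by
      rw [fderiv_dotProduct_apply, dotProduct_mulVec_of_vecMul_eq_smul (hψ l)])

theorem product_of_left_eigenfunctions_is_eigenfunction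
    (n k : ℕ) (hn : 0 < n) (hk : 0 < k)
    (A : Matrix (Fin n) (Fin n) ℂ)
    (μ : Fin k → ℂ) (ψ : Fin k → Fin n → ℂ)
    (hψ : ∀ l, Matrix.vecMul (ψ l) A = μ l • ψ l) :
    ∀ z : Fin n → ℂ,
      fderiv ℂ (fun w : Fin n → ℂ => ∏ l, (ψ l ⬝ᵥ w)) z (A.mulVec z)
        = (∑ l, μ l) * ∏ l, (ψ l ⬝ᵥ z) :=
  product_of_left_eigenfunctions_is_eigenfunction_general n k A μ ψ hψ
end

section
/- Let n be a positive integer and A an n×n complex matrix that is diagonalizable: A = T D T⁻¹ for some invertible matrix T and diagonal matrix D, and suppose every diagonal entry of D has real part strictly less than 0. For a multivariate polynomial p in the variables X₁,…,Xₙ over ℂ, define L(p) = Σᵢ (Σⱼ Aᵢⱼ Xⱼ) · (∂p/∂Xᵢ). Then L maps homogeneous polynomials of degree d to homogeneous polynomials of degree d, and for every integer d ≥ 1 and every homogeneous polynomial q of degree d there exists a unique homogeneous polynomial p of degree d with L(p) = q; i.e., L restricted to homogeneous polynomials of degree d is a linear bijection. -/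
/-!
`L_A` is the derivation of `ℂ[X₁, …, Xₙ]` sending `Xₖ` to the linear form `(A X)ₖ`. The linear
change of variables `X ↦ T⁻¹ X` is an algebra automorphism preserving degrees which intertwines
`L_A` with `L_D`. For diagonal `D` the monomial `X^α` is an eigenvector of `L_D` with eigenvalue
`Σᵢ αᵢ Dᵢᵢ`, whose real part is negative as soon as `α ≠ 0`; so in positive degree `L_D` is
inverted coefficientwise, and `L_A` is inverted by conjugation.
-/

open MvPolynomial

/-- Lie derivative of a polynomial along the linear vector field `z ↦ A z`:
`L p = Σᵢ (Σⱼ Aᵢⱼ Xⱼ) ∂p/∂Xᵢ`. -/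
noncomputable def lieDeriv {n : ℕ} (A : Matrix (Fin n) (Fin n) ℂ)
    (p : MvPolynomial (Fin n) ℂ) : MvPolynomial (Fin n) ℂ :=
  ∑ i, (∑ j, MvPolynomial.C (A i j) * MvPolynomial.X j) * MvPolynomial.pderiv i p

namespace MvPolynomial

variable {R σ ι : Type*} [CommSemiring R]

theorem derivation_apply_algHom_eq_of_X {A : Type*} [CommSemiring A] [Algebra R A]
    (D₁ : Derivation R A A) (D₂ : Derivation R (MvPolynomial σ R) (MvPolynomial σ R))
    (φ : MvPolynomial σ R →ₐ[R] A) (h : ∀ i, D₁ (φ (X i)) = φ (D₂ (X i)))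
    (p : MvPolynomial σ R) : D₁ (φ p) = φ (D₂ p) := by
  induction p using MvPolynomial.induction_on with
  | C a => simp [← algebraMap_eq]
  | add p q hp hq => simp only [map_add, hp, hq]
  | mul_X p i hp => simp only [map_mul, map_add, Derivation.leibniz, hp, h, smul_eq_mul]

theorem IsHomogeneous.ne_zero_of_mem_support {p : MvPolynomial σ R} {d : ℕ}
    (hp : p.IsHomogeneous d) (hd : d ≠ 0) {α : σ →₀ ℕ} (hα : α ∈ p.support) : α ≠ 0 := by
  rintro rfl
  exact hd (by simpa using hp.degree_eq_sum_deg_support hα)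

variable [Fintype ι]

theorem bind₁_toMvPolynomial_comp (M N : Matrix ι ι R) :
    (bind₁ N.toMvPolynomial).comp (bind₁ M.toMvPolynomial) = bind₁ (M * N).toMvPolynomial := by
  rw [bind₁_comp_bind₁]
  congr 1
  funext i
  exact (M.toMvPolynomial_mul N i).symm

noncomputable def linearSubstAlgEquiv [DecidableEq ι] {M N : Matrix ι ι R}
    (hMN : M * N = 1) (hNM : N * M = 1) : MvPolynomial ι R ≃ₐ[R] MvPolynomial ι R :=
  AlgEquiv.ofAlgHom (bind₁ M.toMvPolynomial) (bind₁ N.toMvPolynomial)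
    (by rw [bind₁_toMvPolynomial_comp, hNM, Matrix.toMvPolynomial_one, bind₁_X_left])
    (by rw [bind₁_toMvPolynomial_comp, hMN, Matrix.toMvPolynomial_one, bind₁_X_left])

theorem IsHomogeneous.bind₁_toMvPolynomial {p : MvPolynomial ι R} {d : ℕ}
    (h : p.IsHomogeneous d) (M : Matrix ι ι R) :
    (bind₁ M.toMvPolynomial p).IsHomogeneous d := by
  simpa using h.aeval _ M.toMvPolynomial_isHomogeneous

theorem mkDerivation_toMvPolynomial (A M : Matrix ι ι R) (k : ι) :
    mkDerivation R A.toMvPolynomial (M.toMvPolynomial k) = (M * A).toMvPolynomial k := by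
  rw [Matrix.toMvPolynomial_mul]
  simp [Matrix.toMvPolynomial, ← C_mul_X_eq_monomial, ← smul_eq_C_mul]

theorem mkDerivation_toMvPolynomial_bind₁ {A D M : Matrix ι ι R} (h : M * A = D * M)
    (p : MvPolynomial ι R) :
    mkDerivation R A.toMvPolynomial (bind₁ M.toMvPolynomial p)
      = bind₁ M.toMvPolynomial (mkDerivation R D.toMvPolynomial p) := by
  refine derivation_apply_algHom_eq_of_X _ _ _ (fun k => ?_) p
  rw [bind₁_X_right, mkDerivation_X, mkDerivation_toMvPolynomial, h, Matrix.toMvPolynomial_mul]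

end MvPolynomial

section LieDeriv

variable {n : ℕ}

theorem lieDeriv_eq_sum (A : Matrix (Fin n) (Fin n) ℂ) (p : MvPolynomial (Fin n) ℂ) :
    lieDeriv A p = ∑ i, A.toMvPolynomial i * pderiv i p := by
  simp [lieDeriv, Matrix.toMvPolynomial, C_mul_X_eq_monomial]

theorem lieDeriv_eq_mkDerivation (A : Matrix (Fin n) (Fin n) ℂ) (p : MvPolynomial (Fin n) ℂ) :
    lieDeriv A p = mkDerivation ℂ A.toMvPolynomial p := by
  have : ∑ i, A.toMvPolynomial i • pderiv i = mkDerivation ℂ A.toMvPolynomial :=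
    derivation_ext fun k => by
      rw [← Derivation.coeFnAddMonoidHom_apply, map_sum, Finset.sum_apply]
      simp [pderiv_X, Pi.single_apply]
  rw [lieDeriv_eq_sum, ← this, ← Derivation.coeFnAddMonoidHom_apply, map_sum, Finset.sum_apply]
  rfl

theorem isHomogeneous_lieDeriv (A : Matrix (Fin n) (Fin n) ℂ) {p : MvPolynomial (Fin n) ℂ}
    {d : ℕ} (h : p.IsHomogeneous d) : (lieDeriv A p).IsHomogeneous d := by
  obtain _ | d := d
  · rw [← totalDegree_zero_iff_isHomogeneous, totalDegree_eq_zero_iff_eq_C] at h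
    rw [h, lieDeriv_eq_mkDerivation, ← algebraMap_eq, Derivation.map_algebraMap]
    exact isHomogeneous_zero _ _ _
  · rw [lieDeriv_eq_sum, add_comm]
    exact IsHomogeneous.sum _ _ _ fun i _ => (A.toMvPolynomial_isHomogeneous i).mul h.pderiv

theorem lieDeriv_bind₁_toMvPolynomial {A D M : Matrix (Fin n) (Fin n) ℂ} (h : M * A = D * M)
    (p : MvPolynomial (Fin n) ℂ) :
    lieDeriv A (bind₁ M.toMvPolynomial p) = bind₁ M.toMvPolynomial (lieDeriv D p) := by
  simp only [lieDeriv_eq_mkDerivation, mkDerivation_toMvPolynomial_bind₁ h]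

noncomputable def monomialEigenvalue (D : Matrix (Fin n) (Fin n) ℂ) (α : Fin n →₀ ℕ) : ℂ :=
  ∑ i, (α i : ℂ) * D i i

theorem lieDeriv_monomial_of_isDiag {D : Matrix (Fin n) (Fin n) ℂ} (hD : D.IsDiag)
    (α : Fin n →₀ ℕ) (c : ℂ) :
    lieDeriv D (monomial α c) = monomialEigenvalue D α • monomial α c := by
  have hdiag : ∀ i, (∑ j, C (D i j) * X j : MvPolynomial (Fin n) ℂ) = C (D i i) * X i :=
    fun i => Finset.sum_eq_single i (fun j _ hji => by rw [hD hji.symm, C_0, zero_mul])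
      (by simp)
  simp only [lieDeriv, hdiag, mul_assoc, X_mul_pderiv_monomial]
  simp only [monomialEigenvalue, Finset.sum_smul, ← smul_eq_C_mul, mul_smul, Nat.cast_smul_eq_nsmul]
  exact Finset.sum_congr rfl fun i _ => smul_comm _ _ _

theorem coeff_lieDeriv_of_isDiag {D : Matrix (Fin n) (Fin n) ℂ} (hD : D.IsDiag)
    (p : MvPolynomial (Fin n) ℂ) (β : Fin n →₀ ℕ) :
    coeff β (lieDeriv D p) = monomialEigenvalue D β * coeff β p := by
  induction p using MvPolynomial.induction_on' with
  | monomial α c =>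
    simp only [lieDeriv_monomial_of_isDiag hD, coeff_smul, coeff_monomial]
    split_ifs with h <;> simp [h]
  | add p q hp hq =>
    rw [lieDeriv_eq_mkDerivation] at hp hq ⊢
    rw [map_add, coeff_add, coeff_add, hp, hq, mul_add]

theorem re_monomialEigenvalue_neg {D : Matrix (Fin n) (Fin n) ℂ} (hstable : ∀ i, (D i i).re < 0)
    {α : Fin n →₀ ℕ} (hα : α ≠ 0) : (monomialEigenvalue D α).re < 0 := by
  obtain ⟨i, hi⟩ := Finsupp.ne_iff.mp hα
  simp only [monomialEigenvalue, Complex.re_sum, Complex.mul_re, Complex.natCast_re,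
    Complex.natCast_im, zero_mul, sub_zero]
  refine Finset.sum_neg' (fun j _ => ?_) ⟨i, Finset.mem_univ i, ?_⟩
  · exact mul_nonpos_of_nonneg_of_nonpos (Nat.cast_nonneg _) (hstable j).le
  · exact mul_neg_of_pos_of_neg (Nat.cast_pos.mpr (Nat.pos_of_ne_zero hi)) (hstable i)

theorem monomialEigenvalue_ne_zero {D : Matrix (Fin n) (Fin n) ℂ}
    (hstable : ∀ i, (D i i).re < 0) {α : Fin n →₀ ℕ} (hα : α ≠ 0) :
    monomialEigenvalue D α ≠ 0 := fun h0 =>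
  (re_monomialEigenvalue_neg hstable hα).ne (by rw [h0, Complex.zero_re])

theorem eq_of_lieDeriv_eq_of_isDiag {D : Matrix (Fin n) (Fin n) ℂ} (hD : D.IsDiag)
    (hstable : ∀ i, (D i i).re < 0) {d : ℕ} (hd : d ≠ 0) {p₁ p₂ : MvPolynomial (Fin n) ℂ}
    (hp₁ : p₁.IsHomogeneous d) (hp₂ : p₂.IsHomogeneous d) (h : lieDeriv D p₁ = lieDeriv D p₂) :
    p₁ = p₂ := by
  ext β
  rcases eq_or_ne β 0 with rfl | hβ
  · rw [hp₁.coeff_eq_zero (by simpa using hd.symm), hp₂.coeff_eq_zero (by simpa using hd.symm)]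
  · have := congrArg (coeff β) h
    rwa [coeff_lieDeriv_of_isDiag hD, coeff_lieDeriv_of_isDiag hD,
      mul_right_inj' (monomialEigenvalue_ne_zero hstable hβ)] at this

theorem existsUnique_lieDeriv_eq_of_isDiag {D : Matrix (Fin n) (Fin n) ℂ} (hD : D.IsDiag)
    (hstable : ∀ i, (D i i).re < 0) {d : ℕ} (hd : d ≠ 0) {q : MvPolynomial (Fin n) ℂ}
    (hq : q.IsHomogeneous d) :
    ∃! p : MvPolynomial (Fin n) ℂ, p.IsHomogeneous d ∧ lieDeriv D p = q := by
  refine existsUnique_of_exists_of_unique ?_ fun p₁ p₂ ⟨hp₁, h₁⟩ ⟨hp₂, h₂⟩ =>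
    eq_of_lieDeriv_eq_of_isDiag hD hstable hd hp₁ hp₂ (h₁.trans h₂.symm)
  refine ⟨∑ α ∈ q.support, monomial α (coeff α q / monomialEigenvalue D α),
    IsHomogeneous.sum _ _ _ fun α hα => isHomogeneous_monomial _
      (hq.degree_eq_sum_deg_support hα).symm, ?_⟩
  ext β
  rw [coeff_lieDeriv_of_isDiag hD, coeff_sum]
  simp only [coeff_monomial, Finset.sum_ite_eq']
  split_ifs with hβ
  · exact mul_div_cancel₀ _ (monomialEigenvalue_ne_zero hstable (hq.ne_zero_of_mem_support hd hβ))
  · rw [mul_zero, notMem_support_iff.mp hβ]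

theorem existsUnique_lieDeriv_eq_of_conj {A D M N : Matrix (Fin n) (Fin n) ℂ}
    (hMN : M * N = 1) (hNM : N * M = 1) (hconj : M * A = D * M) {d : ℕ}
    (hD : ∀ q : MvPolynomial (Fin n) ℂ, q.IsHomogeneous d →
      ∃! p : MvPolynomial (Fin n) ℂ, p.IsHomogeneous d ∧ lieDeriv D p = q)
    {q : MvPolynomial (Fin n) ℂ} (hq : q.IsHomogeneous d) :
    ∃! p : MvPolynomial (Fin n) ℂ, p.IsHomogeneous d ∧ lieDeriv A p = q := by
  let e := linearSubstAlgEquiv hMN hNM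
  have he : ∀ p, e p = bind₁ M.toMvPolynomial p := fun _ => rfl
  have he_symm : ∀ p, e.symm p = bind₁ N.toMvPolynomial p := fun _ => rfl
  have hhom : ∀ p : MvPolynomial (Fin n) ℂ, (e p).IsHomogeneous d ↔ p.IsHomogeneous d :=
    fun p => ⟨fun h => e.symm_apply_apply p ▸ he_symm (e p) ▸ h.bind₁_toMvPolynomial N,
      fun h => he p ▸ h.bind₁_toMvPolynomial M⟩
  refine (e.toEquiv.existsUnique_congr fun p => ?_).mp
    (hD _ ((hhom _).mp (e.apply_symm_apply q ▸ hq)))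
  change _ ↔ (e p).IsHomogeneous d ∧ lieDeriv A (e p) = q
  rw [hhom, he, lieDeriv_bind₁_toMvPolynomial hconj, ← he, e.eq_symm_apply]

end LieDeriv

theorem lieDeriv_bijective_on_homogeneous_general
    (n : ℕ)
    (A T D : Matrix (Fin n) (Fin n) ℂ)
    (hT : IsUnit T.det) (hD : D.IsDiag)
    (hA : A = T * D * T⁻¹)
    (hstable : ∀ i, (D i i).re < 0) :
    (∀ (d : ℕ) (p : MvPolynomial (Fin n) ℂ),
        p.IsHomogeneous d → (lieDeriv A p).IsHomogeneous d)
    ∧ (∀ d : ℕ, 1 ≤ d → ∀ q : MvPolynomial (Fin n) ℂ, q.IsHomogeneous d →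
        ∃! p : MvPolynomial (Fin n) ℂ, p.IsHomogeneous d ∧ lieDeriv A p = q) := by
  refine ⟨fun d p hp => isHomogeneous_lieDeriv A hp, fun d hd q hq => ?_⟩
  have hconj : T⁻¹ * A = D * T⁻¹ := by
    rw [hA, Matrix.mul_assoc, ← Matrix.mul_assoc T⁻¹, Matrix.nonsing_inv_mul T hT, Matrix.one_mul]
  exact existsUnique_lieDeriv_eq_of_conj (Matrix.nonsing_inv_mul T hT) (Matrix.mul_nonsing_inv T hT)
    hconj (fun q' hq' => existsUnique_lieDeriv_eq_of_isDiag hD hstable (by omega) hq') hq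

theorem lieDeriv_bijective_on_homogeneous
    (n : ℕ) (hn : 0 < n)
    (A T D : Matrix (Fin n) (Fin n) ℂ)
    (hT : IsUnit T.det) (hD : D.IsDiag)
    (hA : A = T * D * T⁻¹)
    (hstable : ∀ i, (D i i).re < 0) :
    (∀ (d : ℕ) (p : MvPolynomial (Fin n) ℂ),
        p.IsHomogeneous d → (lieDeriv A p).IsHomogeneous d)
    ∧ (∀ d : ℕ, 1 ≤ d → ∀ q : MvPolynomial (Fin n) ℂ, q.IsHomogeneous d →
        ∃! p : MvPolynomial (Fin n) ℂ, p.IsHomogeneous d ∧ lieDeriv A p = q) :=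
  lieDeriv_bijective_on_homogeneous_general n A T D hT hD hA hstable
end

section
/- For each natural number i let λᵢ = −i²π² and define the doubly-indexed real array Π by Πᵢⱼ = λᵢ + √(λᵢ² + 1) if i = j and Πᵢⱼ = 0 if i ≠ j. Then: (i) for all natural numbers i, j, Σ_{k=0}^∞ Πᵢₖ Πₖⱼ = (λᵢ + λⱼ) Πᵢⱼ + δᵢⱼ, where δᵢⱼ = 1 if i = j and 0 otherwise (the series is summable); (ii) Πᵢᵢ > 0 for every i; and (iii) the closed-loop eigenvalues satisfy λᵢ − Πᵢᵢ = −√(λᵢ² + 1) for every i. -/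
open Real

/-- Open-loop eigenvalues of the Neumann Laplacian on `[0,1]`. -/
noncomputable def lam (i : ℕ) : ℝ := -(i^2 * Real.pi^2)

/-- Diagonal solution of the infinite-dimensional Algebraic Riccati Equation. -/
noncomputable def Pi2 (i j : ℕ) : ℝ :=
  if i = j then lam i + Real.sqrt ((lam i)^2 + 1) else 0

lemma Pi2_off {i j : ℕ} (h : i ≠ j) : Pi2 i j = 0 := by simp [Pi2, h]

lemma sq_sqrt' (i : ℕ) : Real.sqrt ((lam i)^2 + 1) ^ 2 = (lam i)^2 + 1 :=
  Real.sq_sqrt (by positivity)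

lemma Pi2_pos (i : ℕ) : 0 < Pi2 i i := by
  have h1 : (lam i)^2 < (lam i)^2 + 1 := by linarith
  have h2 : |lam i| < Real.sqrt ((lam i)^2 + 1) := by
    rw [← Real.sqrt_sq_eq_abs]
    exact Real.sqrt_lt_sqrt (by positivity) h1
  have := neg_abs_le (lam i)
  have hp : Pi2 i i = lam i + Real.sqrt ((lam i)^2 + 1) := if_pos rfl
  rw [hp]
  linarith [abs_nonneg (lam i)]

lemma support_lemma (i j k : ℕ) (h : ¬(k = i ∧ i = j)) : Pi2 i k * Pi2 k j = 0 := by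
  by_cases hik : i = k
  · subst hik
    have : i ≠ j := fun hij => h ⟨rfl, hij⟩
    rw [Pi2_off this, mul_zero]
  · rw [Pi2_off hik, zero_mul]

theorem infinite_dimensional_riccati_solution :
    (∀ i j : ℕ,
      Summable (fun k => Pi2 i k * Pi2 k j) ∧
      ∑' k : ℕ, Pi2 i k * Pi2 k j
        = (lam i + lam j) * Pi2 i j + (if i = j then (1:ℝ) else 0))
    ∧ (∀ i : ℕ, 0 < Pi2 i i)
    ∧ (∀ i : ℕ, lam i - Pi2 i i = -Real.sqrt ((lam i)^2 + 1)) := by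
  refine ⟨fun i j => ?_, Pi2_pos, fun i => by rw [show Pi2 i i = lam i + Real.sqrt ((lam i)^2 + 1) from if_pos rfl]; ring⟩
  have hsupp : ∀ k, k ≠ i → Pi2 i k * Pi2 k j = 0 := by
    intro k hk
    rw [Pi2_off (fun h => hk h.symm), zero_mul]
  constructor
  · exact summable_of_ne_finset_zero (s := {i}) (fun k hk => hsupp k (by simpa using hk))
  · rw [tsum_eq_single i hsupp]
    by_cases hij : i = j
    · subst hij
      rw [show Pi2 i i = lam i + Real.sqrt ((lam i)^2 + 1) from if_pos rfl, if_pos rfl]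
      have := sq_sqrt' i
      nlinarith [this]
    · rw [Pi2_off hij, mul_zero, mul_zero, if_neg hij, add_zero]
end
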